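/- Let C be a reproducing normal cone in a Banach space X and let f : X → X be continuous, positively homogeneous, order-preserving and convex. Then -f(-x) ≤ f(x) for all x ∈ X, and the cone spectral radius over -C of f equals the cone spectral radius over C of the map f^-(x) := -f(-x); consequently r_X(f) = r_C(f). -/
import Mathlib


open Set Filter Pointwise

/-- The cone spectral radius `r_D(f) = sup_{x ∈ D} limsup_k ‖f^k(x)‖^{1/k}`. -/
noncomputable def coneSpectralRadius {X : Type*} [NormedAddCommGroup X]
    (D : Set X) (f : X → X) : ENNReal :=
  ⨆ (x : X) (_ : x ∈ D),
    Filter.limsup (fun k : ℕ => ENNReal.ofReal (‖f^[k] x‖ ^ ((k : ℝ)⁻¹))) atTop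

theorem convex_map_spectral_radius_eq_cone
    {X : Type*} [NormedAddCommGroup X] [NormedSpace ℝ X] [CompleteSpace X]
    (C : Set X)
    (hclosed : IsClosed C) (hconvC : Convex ℝ C)
    (hcone : ∀ t : ℝ, 0 ≤ t → ∀ x ∈ C, t • x ∈ C)
    (hpointed : ∀ x ∈ C, -x ∈ C → x = 0)
    (M : ℝ) (hM : 0 < M)
    (hnormal : ∀ x y : X, x ∈ C → y - x ∈ C → ‖x‖ ≤ M * ‖y‖)
    (hrepro : ∀ x : X, ∃ y ∈ C, ∃ z ∈ C, x = y - z)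
    (f : X → X) (hcont : Continuous f)
    (hhom : ∀ t : ℝ, 0 < t → ∀ x : X, f (t • x) = t • f x)
    (hmono : ∀ x y : X, y - x ∈ C → f y - f x ∈ C)
    (hconvf : ∀ x y : X, ∀ t : ℝ, 0 ≤ t → t ≤ 1 →
      (t • f x + (1 - t) • f y) - f (t • x + (1 - t) • y) ∈ C) :
    (∀ x : X, f x - (-(f (-x))) ∈ C) ∧
    coneSpectralRadius (-C) f = coneSpectralRadius C (fun x => -(f (-x))) ∧
    coneSpectralRadius (Set.univ : Set X) f = coneSpectralRadius C f := by
  -- f 0 = 0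
  have hf0 : f 0 = 0 := by
    have h2 := hhom 2 (by norm_num) 0
    rw [smul_zero, two_smul] at h2
    have h3 : f 0 + 0 = f 0 + f 0 := by rw [add_zero]; exact h2
    exact (add_left_cancel h3).symm
  -- 0 ∈ C
  have h0C : (0 : X) ∈ C := by
    obtain ⟨y, hy, -⟩ := hrepro 0
    simpa using hcone 0 le_rfl y hy
  -- C closed under addition
  have hadd : ∀ a ∈ C, ∀ b ∈ C, a + b ∈ C := by
    intro a ha b hb
    have h1 := hconvC ha hb (by norm_num : (0:ℝ) ≤ 1/2) (by norm_num : (0:ℝ) ≤ 1/2)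
      (by norm_num)
    have h2 := hcone 2 (by norm_num) _ h1
    have : (2:ℝ) • ((1/2 : ℝ) • a + (1/2 : ℝ) • b) = a + b := by
      rw [smul_add, smul_smul, smul_smul]; norm_num
    rwa [this] at h2
  -- Part 1: f x + f (-x) ∈ C
  have hpart1 : ∀ x : X, f x - (-(f (-x))) ∈ C := by
    intro x
    have h := hconvf x (-x) (1/2) (by norm_num) (by norm_num)
    have hz : (1/2 : ℝ) • x + (1 - 1/2 : ℝ) • (-x) = 0 := by
      norm_num
    rw [hz, hf0, sub_zero] at h
    have h2 := hcone 2 (by norm_num) _ h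
    have heq : (2:ℝ) • ((1/2 : ℝ) • f x + (1 - 1/2 : ℝ) • f (-x)) = f x + f (-x) := by
      rw [smul_add, smul_smul, smul_smul]; norm_num
    rw [heq] at h2
    rwa [sub_neg_eq_add]
  -- iterated monotonicity
  have hmonoIter : ∀ k : ℕ, ∀ x y : X, y - x ∈ C → f^[k] y - f^[k] x ∈ C := by
    intro k
    induction k with
    | zero => intro x y h; simpa using h
    | succ n ih =>
        intro x y h
        rw [Function.iterate_succ_apply', Function.iterate_succ_apply']
        exact hmono _ _ (ih x y h)
  have hIter0 : ∀ k : ℕ, f^[k] (0 : X) = 0 := fun k => Function.iterate_fixed hf0 k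
  have hmapsC : ∀ k : ℕ, ∀ y ∈ C, f^[k] y ∈ C := by
    intro k y hy
    have := hmonoIter k 0 y (by simpa using hy)
    simpa [hIter0] using this
  -- f^[k] z + f^[k] (-z) ∈ C
  have hsum : ∀ k : ℕ, ∀ z : X, f^[k] z + f^[k] (-z) ∈ C := by
    intro k
    induction k with
    | zero => intro z; simpa using h0C
    | succ n ih =>
        intro z
        rw [Function.iterate_succ_apply', Function.iterate_succ_apply']
        have h1 : f (f^[n] z) - f (-(f^[n] (-z))) ∈ C := by
          apply hmono
          have := ih z
          rw [sub_neg_eq_add]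
          exact this
        have h2 : f (-(f^[n] (-z))) + f (f^[n] (-z)) ∈ C := by
          have := hpart1 (-(f^[n] (-z)))
          rwa [sub_neg_eq_add, neg_neg] at this
        have h3 := hadd _ h1 _ h2
        convert h3 using 1
        abel
  -- iterates of f⁻
  have hfm : ∀ k : ℕ, ∀ x : X, (fun x => -(f (-x)))^[k] x = -(f^[k] (-x)) := by
    intro k
    induction k with
    | zero => intro x; simp
    | succ n ih =>
        intro x
        rw [Function.iterate_succ_apply', Function.iterate_succ_apply', ih]
        simp
  refine ⟨hpart1, ?_, ?_⟩
  · -- r_{-C}(f) = r_C(f⁻)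
    unfold coneSpectralRadius
    apply le_antisymm
    · refine iSup₂_le fun x hx => ?_
      rw [Set.mem_neg] at hx
      refine le_trans (le_of_eq ?_) (le_iSup₂ (-x) hx)
      apply congrArg (fun u => limsup u atTop)
      funext k
      rw [hfm k (-x)]
      simp
    · refine iSup₂_le fun x hx => ?_
      refine le_trans (le_of_eq ?_) (le_iSup₂ (-x) (Set.neg_mem_neg.mpr hx))
      apply congrArg (fun u => limsup u atTop)
      funext k
      rw [hfm k x]
      simp
  · -- r_univ(f) = r_C(f)
    unfold coneSpectralRadius
    apply le_antisymm
    · refine iSup₂_le fun x _ => ?_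
      obtain ⟨y, hy, z, hz, hxyz⟩ := hrepro x
      set K : ℝ := 2 * (1 + M) with hKdef
      have hK : 0 < K := by positivity
      -- key norm bound
      have key : ∀ k : ℕ, ‖f^[k] x‖ ≤ K * max ‖f^[k] y‖ ‖f^[k] z‖ := by
        intro k
        have h1 : f^[k] y - f^[k] x ∈ C := by
          apply hmonoIter
          rw [hxyz, sub_sub_cancel]; exact hz
        have h2 : f^[k] x - f^[k] (-z) ∈ C := by
          apply hmonoIter
          rw [hxyz, sub_neg_eq_add, sub_add_cancel]; exact hy
        have h3 := hsum k z
        have h4 : f^[k] x + f^[k] z ∈ C := by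
          have h := hadd _ h2 _ h3
          convert h using 1
          abel
        have h5 : ‖f^[k] y - f^[k] x‖ ≤ M * ‖f^[k] y + f^[k] z‖ := by
          apply hnormal _ _ h1
          convert h4 using 1
          abel
        have h6 : ‖f^[k] x‖ ≤ ‖f^[k] y‖ + ‖f^[k] y - f^[k] x‖ := by
          calc ‖f^[k] x‖ = ‖f^[k] y - (f^[k] y - f^[k] x)‖ := by rw [sub_sub_cancel]
            _ ≤ ‖f^[k] y‖ + ‖f^[k] y - f^[k] x‖ := norm_sub_le _ _
        have h8 : ‖f^[k] y + f^[k] z‖ ≤ ‖f^[k] y‖ + ‖f^[k] z‖ := norm_add_le _ _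
        have ha := le_max_left ‖f^[k] y‖ ‖f^[k] z‖
        have hb := le_max_right ‖f^[k] y‖ ‖f^[k] z‖
        have hMn := hM.le
        nlinarith [norm_nonneg (f^[k] y), norm_nonneg (f^[k] z)]
      -- pass to ENNReal / rpow
      have hb : ∀ k : ℕ, ENNReal.ofReal (‖f^[k] x‖ ^ ((k : ℝ)⁻¹)) ≤
          (fun k : ℕ => ENNReal.ofReal (K ^ ((k : ℝ)⁻¹))) k *
          (fun k : ℕ => ENNReal.ofReal (‖f^[k] y‖ ^ ((k : ℝ)⁻¹)) ⊔
            ENNReal.ofReal (‖f^[k] z‖ ^ ((k : ℝ)⁻¹))) k := by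
        intro k
        have he : (0:ℝ) ≤ (k : ℝ)⁻¹ := by positivity
        have hm0 : (0:ℝ) ≤ max ‖f^[k] y‖ ‖f^[k] z‖ :=
          le_trans (norm_nonneg _) (le_max_left _ _)
        have step1 : ‖f^[k] x‖ ^ ((k : ℝ)⁻¹) ≤ (K * max ‖f^[k] y‖ ‖f^[k] z‖) ^ ((k : ℝ)⁻¹) :=
          Real.rpow_le_rpow (norm_nonneg _) (key k) he
        have step2 : (K * max ‖f^[k] y‖ ‖f^[k] z‖) ^ ((k : ℝ)⁻¹)
            = K ^ ((k : ℝ)⁻¹) * (max ‖f^[k] y‖ ‖f^[k] z‖) ^ ((k : ℝ)⁻¹) :=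
          Real.mul_rpow hK.le hm0
        have step3 : (max ‖f^[k] y‖ ‖f^[k] z‖) ^ ((k : ℝ)⁻¹)
            = max (‖f^[k] y‖ ^ ((k : ℝ)⁻¹)) (‖f^[k] z‖ ^ ((k : ℝ)⁻¹)) := by
          rcases le_total ‖f^[k] y‖ ‖f^[k] z‖ with h | h
          · rw [max_eq_right h, max_eq_right (Real.rpow_le_rpow (norm_nonneg _) h he)]
          · rw [max_eq_left h, max_eq_left (Real.rpow_le_rpow (norm_nonneg _) h he)]
        calc ENNReal.ofReal (‖f^[k] x‖ ^ ((k : ℝ)⁻¹))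
            ≤ ENNReal.ofReal (K ^ ((k : ℝ)⁻¹) *
                max (‖f^[k] y‖ ^ ((k : ℝ)⁻¹)) (‖f^[k] z‖ ^ ((k : ℝ)⁻¹))) := by
              apply ENNReal.ofReal_le_ofReal
              rw [← step3, ← step2]; exact step1
          _ = ENNReal.ofReal (K ^ ((k : ℝ)⁻¹)) *
              (ENNReal.ofReal (‖f^[k] y‖ ^ ((k : ℝ)⁻¹)) ⊔
                ENNReal.ofReal (‖f^[k] z‖ ^ ((k : ℝ)⁻¹))) := by
              rw [ENNReal.ofReal_mul (by positivity)]
              congr 1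
              exact Monotone.map_max (fun a b hab => ENNReal.ofReal_le_ofReal hab)
      have hφ : limsup (fun k : ℕ => ENNReal.ofReal (K ^ ((k : ℝ)⁻¹))) atTop = 1 := by
        apply Filter.Tendsto.limsup_eq
        have h1 : Tendsto (fun k : ℕ => (k : ℝ)⁻¹) atTop (nhds 0) :=
          tendsto_inv_atTop_zero.comp tendsto_natCast_atTop_atTop
        have h2 : Tendsto (fun k : ℕ => K ^ ((k : ℝ)⁻¹)) atTop (nhds 1) := by
          have h1' := h1.const_mul (Real.log K)
          rw [mul_zero] at h1'
          have hc := (Real.continuous_exp.tendsto 0).comp h1'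
          rw [Real.exp_zero] at hc
          apply hc.congr
          intro k
          exact (Real.rpow_def_of_pos hK _).symm
        have h3 := ENNReal.tendsto_ofReal h2
        simpa using h3
      calc limsup (fun k : ℕ => ENNReal.ofReal (‖f^[k] x‖ ^ ((k : ℝ)⁻¹))) atTop
          ≤ limsup ((fun k : ℕ => ENNReal.ofReal (K ^ ((k : ℝ)⁻¹))) *
              (fun k : ℕ => ENNReal.ofReal (‖f^[k] y‖ ^ ((k : ℝ)⁻¹)) ⊔
                ENNReal.ofReal (‖f^[k] z‖ ^ ((k : ℝ)⁻¹)))) atTop :=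
            limsup_le_limsup (Eventually.of_forall hb)
        _ ≤ limsup (fun k : ℕ => ENNReal.ofReal (K ^ ((k : ℝ)⁻¹))) atTop *
            limsup (fun k : ℕ => ENNReal.ofReal (‖f^[k] y‖ ^ ((k : ℝ)⁻¹)) ⊔
              ENNReal.ofReal (‖f^[k] z‖ ^ ((k : ℝ)⁻¹))) atTop :=
            ENNReal.limsup_mul_le' (by rw [hφ]; exact Or.inl one_ne_zero)
              (by rw [hφ]; exact Or.inl ENNReal.one_ne_top)
        _ = limsup (fun k : ℕ => ENNReal.ofReal (‖f^[k] y‖ ^ ((k : ℝ)⁻¹)) ⊔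
              ENNReal.ofReal (‖f^[k] z‖ ^ ((k : ℝ)⁻¹))) atTop := by rw [hφ, one_mul]
        _ = limsup (fun k : ℕ => ENNReal.ofReal (‖f^[k] y‖ ^ ((k : ℝ)⁻¹))) atTop ⊔
            limsup (fun k : ℕ => ENNReal.ofReal (‖f^[k] z‖ ^ ((k : ℝ)⁻¹))) atTop :=
            limsup_max
        _ ≤ ⨆ (x : X) (_ : x ∈ C),
            limsup (fun k : ℕ => ENNReal.ofReal (‖f^[k] x‖ ^ ((k : ℝ)⁻¹))) atTop :=
            sup_le
              (le_iSup₂ (f := fun (w : X) (_ : w ∈ C) =>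
                limsup (fun k : ℕ => ENNReal.ofReal (‖f^[k] w‖ ^ ((k : ℝ)⁻¹))) atTop) y hy)
              (le_iSup₂ (f := fun (w : X) (_ : w ∈ C) =>
                limsup (fun k : ℕ => ENNReal.ofReal (‖f^[k] w‖ ^ ((k : ℝ)⁻¹))) atTop) z hz)
    · exact iSup₂_le fun x hx =>
        le_iSup₂ (f := fun (w : X) (_ : w ∈ (Set.univ : Set X)) =>
          limsup (fun k : ℕ => ENNReal.ofReal (‖f^[k] w‖ ^ ((k : ℝ)⁻¹))) atTop) x (Set.mem_univ x)
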